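/- arXiv:2601.05415 — 2 statements merged into one kernel-verified Lean document; each statement's English description precedes it below -/
import Mathlib

section
/- Let π_1,…,π_G > 0 with Σπ_g = 1, let μ_1,…,μ_G ∈ ℝ^p, and let μ = Σ_g π_g μ_g. Define Σ_B = Σ_g π_g (μ_g − μ)(μ_g − μ)^⊤ and define Γ ∈ ℝ^{p×(G−1)} columnwise by Γ_r = √(π_{r+1}) (Σ_{i=1}^r π_i (μ_i − μ_{r+1})) / √((Σ_{i=1}^r π_i)(Σ_{i=1}^{r+1} π_i)) for r = 1,…,G−1. Then Σ_B = Γ Γ^⊤. -/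
/-!
Σ_B is the weighted scatter of the means about their centre of mass. Adding the groups one at a
time, with `W_r = π_1 + ⋯ + π_r` and `m_r` the weighted mean of `μ_1, …, μ_r`, the scatter grows
by the rank-one term `π_{r+1} W_r / W_{r+1} • (m_r - μ_{r+1})(m_r - μ_{r+1})ᵀ` (Welford's update).
Since `W_r (m_r - μ_{r+1}) = ∑_{i ≤ r} π_i (μ_i - μ_{r+1})`, that increment is `Γ_r Γ_rᵀ`, and the
scatter telescopes to `Γ Γᵀ`. The computation is done entrywise.
-/

open Matrix BigOperators Finset

theorem Fin.sum_univ_ite_val_le {M : Type*} [AddCommMonoid M] {n r : ℕ} (hr : r < n)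
    (f : ℕ → M) : (∑ i : Fin n, if (i : ℕ) ≤ r then f i else 0) = ∑ i ∈ range (r + 1), f i := by
  rw [Fin.sum_univ_eq_sum_range (fun i => if i ≤ r then f i else 0), ← sum_filter]
  congr 1
  ext i
  simp only [mem_filter, mem_range]
  omega

section WeightedScatter

variable {K : Type*} [Field K]

theorem Finset.sum_mul_sub_centerMass_mul_sub_centerMass {ι : Type*} (s : Finset ι)
    (w a b : ι → K) :
    ∑ i ∈ s, w i * ((a i - s.centerMass w a) * (b i - s.centerMass w b)) =
      ∑ i ∈ s, w i * a i * b i - (∑ i ∈ s, w i * a i) * (∑ i ∈ s, w i * b i) / ∑ i ∈ s, w i := by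
  simp only [centerMass, smul_eq_mul]
  set W := ∑ i ∈ s, w i
  set A := ∑ i ∈ s, w i * a i
  set B := ∑ i ∈ s, w i * b i
  have expand : ∀ i, w i * ((a i - W⁻¹ * A) * (b i - W⁻¹ * B)) =
      w i * a i * b i - w i * a i * (W⁻¹ * B) - w i * b i * (W⁻¹ * A) + w i * (W⁻¹ * A * (W⁻¹ * B)) :=
    fun i => by ring
  simp only [expand, sum_add_distrib, sum_sub_distrib, ← sum_mul]
  rcases eq_or_ne W 0 with hW | hW
  · simp [hW]
  · field_simp
    ring

theorem scatter_add_point {S A B W c x y : K} (hW : W ≠ 0) (hWc : W + c ≠ 0) :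
    S + c * x * y - (A + c * x) * (B + c * y) / (W + c) =
      S - A * B / W + c / (W * (W + c)) * (A - W * x) * (B - W * y) := by
  field_simp
  ring

def helmertContrast (w a : ℕ → K) (r : ℕ) : K :=
  ∑ i ∈ range (r + 1), w i * (a i - a (r + 1))

theorem helmertContrast_eq_sub (w a : ℕ → K) (r : ℕ) :
    helmertContrast w a r =
      ∑ i ∈ range (r + 1), w i * a i - (∑ i ∈ range (r + 1), w i) * a (r + 1) := by
  simp only [helmertContrast, mul_sub, sum_sub_distrib, sum_mul]

theorem scatter_eq_sum_helmertContrast (w a b : ℕ → K) (n : ℕ)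
    (hw : ∀ r ≤ n, ∑ i ∈ range (r + 1), w i ≠ 0) :
    ∑ i ∈ range (n + 1), w i * a i * b i -
        (∑ i ∈ range (n + 1), w i * a i) * (∑ i ∈ range (n + 1), w i * b i) /
          ∑ i ∈ range (n + 1), w i =
      ∑ r ∈ range n, w (r + 1) / ((∑ i ∈ range (r + 1), w i) * ∑ i ∈ range (r + 2), w i) *
        helmertContrast w a r * helmertContrast w b r := by
  induction n with
  | zero =>
    have h0 : w 0 ≠ 0 := by simpa using hw 0 le_rfl
    simp only [zero_add, sum_range_one, sum_range_zero]
    field_simp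
    ring
  | succ n ih =>
    have hWn := hw n (by omega)
    have hWn' := hw (n + 1) le_rfl
    rw [sum_range_succ w (n + 1)] at hWn'
    rw [sum_range_succ _ (n + 1), sum_range_succ _ (n + 1), sum_range_succ _ (n + 1),
      sum_range_succ w (n + 1), scatter_add_point hWn hWn', ih fun r hr => hw r (by omega)]
    conv_rhs =>
      rw [sum_range_succ, helmertContrast_eq_sub, helmertContrast_eq_sub, sum_range_succ w (n + 1)]

theorem Fin.sum_mul_sub_centerMass_mul_sub_centerMass_eq_sum_helmertContrast {n : ℕ}
    (w a b : ℕ → K) (hw : ∀ r < n, ∑ i ∈ range (r + 1), w i ≠ 0) :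
    ∑ g : Fin n, w g * ((a g - univ.centerMass (fun g : Fin n => w g) (fun g => a g)) *
        (b g - univ.centerMass (fun g : Fin n => w g) (fun g => b g))) =
      ∑ r : Fin (n - 1), w (r + 1) / ((∑ i ∈ range (r + 1), w i) * ∑ i ∈ range (r + 2), w i) *
        helmertContrast w a r * helmertContrast w b r := by
  rw [sum_mul_sub_centerMass_mul_sub_centerMass,
    Fin.sum_univ_eq_sum_range (fun i => w i * a i * b i),
    Fin.sum_univ_eq_sum_range (fun i => w i * a i), Fin.sum_univ_eq_sum_range (fun i => w i * b i),
    Fin.sum_univ_eq_sum_range w,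
    Fin.sum_univ_eq_sum_range (fun r => w (r + 1) / ((∑ i ∈ range (r + 1), w i) *
      ∑ i ∈ range (r + 2), w i) * helmertContrast w a r * helmertContrast w b r)]
  cases n with
  | zero => simp
  | succ n => exact scatter_eq_sum_helmertContrast w a b n fun r hr => hw r (by omega)

end WeightedScatter

theorem sqrt_mul_div_sqrt_mul_sqrt_mul_div_sqrt {c d x y : ℝ} (hc : 0 ≤ c) (hd : 0 ≤ d) :
    √c * x / √d * (√c * y / √d) = c / d * x * y := by
  rw [div_mul_div_comm, mul_mul_mul_comm, Real.mul_self_sqrt hc, Real.mul_self_sqrt hd]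
  ring

/-- the between-group covariance Σ_B factors as ΓΓᵀ with Γ the
Helmert-type contrast matrix of the group means. -/
theorem between_group_covariance_factorization
    {p G : ℕ}
    (pr : Fin G → ℝ) (hpos : ∀ g, 0 < pr g) (hsum : ∑ g, pr g = 1)
    (μ : Fin G → (Fin p → ℝ)) (μbar : Fin p → ℝ)
    (hμbar : μbar = ∑ g, pr g • μ g)
    (SB : Matrix (Fin p) (Fin p) ℝ)
    (hSB : SB = ∑ g, pr g • Matrix.vecMulVec (μ g - μbar) (μ g - μbar))
    (Γ : Matrix (Fin p) (Fin (G - 1)) ℝ)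
    (hΓ : ∀ (r : Fin (G - 1)) (j : Fin p),
      Γ j r =
        Real.sqrt (pr ⟨r.val + 1, by have := r.isLt; omega⟩) *
          (∑ i : Fin G, if (i : ℕ) ≤ r.val
            then pr i * (μ i j - μ ⟨r.val + 1, by have := r.isLt; omega⟩ j) else 0) /
        Real.sqrt ((∑ i : Fin G, if (i : ℕ) ≤ r.val then pr i else 0) *
          (∑ i : Fin G, if (i : ℕ) ≤ r.val + 1 then pr i else 0))) :
    SB = Γ * Γᵀ := by
  -- extending the data to `ℕ` turns the partial sums over `Fin G` into sums over `range`
  obtain ⟨w, rfl⟩ : ∃ w : ℕ → ℝ, pr = fun g : Fin G => w g :=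
    ⟨Function.extend Fin.val pr 0, funext fun g => (Fin.val_injective.extend_apply _ _ g).symm⟩
  obtain ⟨m, rfl⟩ : ∃ m : ℕ → Fin p → ℝ, μ = fun g : Fin G => m g :=
    ⟨Function.extend Fin.val μ 0, funext fun g => (Fin.val_injective.extend_apply _ _ g).symm⟩
  beta_reduce at *
  have hW : ∀ r < G, 0 < ∑ i ∈ range (r + 1), w i := fun r hr =>
    sum_pos (fun i hi => hpos ⟨i, by simp at hi; omega⟩) nonempty_range_add_one
  have hΓ' : ∀ (r : Fin (G - 1)) (j : Fin p), Γ j r = √(w (r + 1)) *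
      helmertContrast w (m · j) r / √((∑ i ∈ range (r + 1), w i) * ∑ i ∈ range (r + 2), w i) := by
    intro r j
    rw [hΓ, Fin.sum_univ_ite_val_le (r := r) (by omega),
      Fin.sum_univ_ite_val_le (r := r) (by omega) (fun i => w i * (m i j - m (r + 1) j)),
      Fin.sum_univ_ite_val_le (r := r + 1) (by omega)]
    rfl
  ext j k
  calc SB j k = ∑ g : Fin G, w g * ((m g j - univ.centerMass (fun g : Fin G => w g) (m · j)) *
        (m g k - univ.centerMass (fun g : Fin G => w g) (m · k))) := by
        simp [hSB, hμbar, hsum, centerMass, Matrix.sum_apply, Finset.sum_apply, vecMulVec_apply]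
    _ = ∑ r : Fin (G - 1), w (r + 1) / ((∑ i ∈ range (r + 1), w i) * ∑ i ∈ range (r + 2), w i) *
          helmertContrast w (m · j) r * helmertContrast w (m · k) r :=
        Fin.sum_mul_sub_centerMass_mul_sub_centerMass_eq_sum_helmertContrast w (m · j) (m · k)
          fun r hr => (hW r hr).ne'
    _ = (Γ * Γᵀ) j k := by
        rw [mul_apply]
        refine sum_congr rfl fun r _ => ?_
        rw [transpose_apply, hΓ', hΓ']
        exact (sqrt_mul_div_sqrt_mul_sqrt_mul_div_sqrt (hpos ⟨r + 1, by omega⟩).le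
          (mul_pos (hW r (by omega)) (hW (r + 1) (by omega))).le).symm
end

section
/- Let Σ_g ∈ ℝ^{p×p} be symmetric positive definite, Γ ∈ ℝ^{p×(G−1)} of full column rank, and Σ_B = ΓΓ^⊤. Suppose Φ_g ∈ ℝ^{p×(G−1)} has full column rank and col(Φ_g) = col(Σ_g^{-1}Γ). Define Θ_g = (Σ_g + Σ_B)^{-1}Γ. Then col(Θ_g) = col(Φ_g), i.e., there exists an invertible R_g ∈ ℝ^{(G−1)×(G−1)} with Θ_g = Φ_g R_g. -/
/-!
The push-through form of the Woodbury identity gives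
`(Σ + ΓΓᵀ)⁻¹Γ = Σ⁻¹Γ (1 + ΓᵀΣ⁻¹Γ)⁻¹`, and `Σ⁻¹Γ = Φ C` because the columns of `Σ⁻¹Γ` lie in
`col Φ`; so `Θ = Φ R` with `R = C (1 + ΓᵀΣ⁻¹Γ)⁻¹`. Since `Θ = (Σ + ΓΓᵀ)⁻¹Γ` is injective, so is
the square matrix `R`, which is therefore invertible.
-/

open Matrix

namespace Matrix

theorem inv_add_mul_mul_eq_inv_mul_mul_inv {m n α : Type*} [Fintype m] [Fintype n]
    [DecidableEq m] [DecidableEq n] [CommRing α] {A : Matrix m m α} (U : Matrix m n α)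
    (V : Matrix n m α) (hA : IsUnit A.det) (hM : IsUnit (1 + V * A⁻¹ * U).det) :
    (A + U * V)⁻¹ * U = A⁻¹ * U * (1 + V * A⁻¹ * U)⁻¹ := by
  have hAUV : IsUnit (A + U * V).det := by
    rw [det_add_mul U V hA]
    exact hA.mul hM
  have key : (A + U * V) * (A⁻¹ * U * (1 + V * A⁻¹ * U)⁻¹) = U := calc
    _ = U * (1 + V * A⁻¹ * U) * (1 + V * A⁻¹ * U)⁻¹ := by
      simp only [Matrix.add_mul, Matrix.mul_add, Matrix.mul_one, Matrix.mul_assoc,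
        mul_nonsing_inv_cancel_left _ _ hA]
    _ = U := by rw [Matrix.mul_assoc, mul_nonsing_inv _ hM, Matrix.mul_one]
  calc (A + U * V)⁻¹ * U
      = (A + U * V)⁻¹ * ((A + U * V) * (A⁻¹ * U * (1 + V * A⁻¹ * U)⁻¹)) := by rw [key]
    _ = A⁻¹ * U * (1 + V * A⁻¹ * U)⁻¹ := nonsing_inv_mul_cancel_left _ _ hAUV

theorem exists_mul_eq_of_range_mulVecLin_le {l m n α : Type*} [Fintype m] [Fintype n]
    [DecidableEq n] [CommSemiring α] {A : Matrix l n α} {B : Matrix l m α}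
    (h : LinearMap.range A.mulVecLin ≤ LinearMap.range B.mulVecLin) :
    ∃ C : Matrix m n α, B * C = A := by
  choose c hc using fun j => h (LinearMap.mem_range_self A.mulVecLin (Pi.single j 1))
  refine ⟨(of c)ᵀ, ext_of_mulVec_single fun j => ?_⟩
  rw [← mulVec_mulVec, mulVec_single_one]
  exact hc j

theorem isUnit_det_of_mul_eq {l n K : Type*} [Fintype n] [DecidableEq n] [Field K]
    {A B : Matrix l n K} {C : Matrix n n K}
    (hA : Function.Injective A.mulVec) (h : B * C = A) : IsUnit C.det := by
  rw [← isUnit_iff_isUnit_det, ← mulVec_injective_iff_isUnit]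
  refine Function.Injective.of_comp (f := B.mulVec) fun x y hxy => hA ?_
  simpa only [Function.comp_apply, mulVec_mulVec, h] using hxy

end Matrix

theorem surrogate_spans_discriminant_subspace_general
    {p G : ℕ}
    (Sg : Matrix (Fin p) (Fin p) ℝ) (hSg : Sg.PosDef)
    (Γ : Matrix (Fin p) (Fin (G - 1)) ℝ) (hΓ : Function.Injective Γ.mulVec)
    (Φg : Matrix (Fin p) (Fin (G - 1)) ℝ)
    (hcol : LinearMap.range Φg.mulVecLin = LinearMap.range (Sg⁻¹ * Γ).mulVecLin) :
    ∃ R : Matrix (Fin (G - 1)) (Fin (G - 1)) ℝ,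
      IsUnit R.det ∧ (Sg + Γ * Γᵀ)⁻¹ * Γ = Φg * R := by
  have hT : (Sg + Γ * Γᵀ).PosDef := hSg.add_posSemidef Γ.posSemidef_self_mul_conjTranspose
  have hM : (1 + Γᵀ * Sg⁻¹ * Γ).PosDef :=
    PosDef.one.add_posSemidef (hSg.inv.posSemidef.conjTranspose_mul_mul_same Γ)
  obtain ⟨C, hC⟩ := exists_mul_eq_of_range_mulVecLin_le hcol.ge
  have hΘ : (Sg + Γ * Γᵀ)⁻¹ * Γ = Φg * (C * (1 + Γᵀ * Sg⁻¹ * Γ)⁻¹) := by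
    rw [inv_add_mul_mul_eq_inv_mul_mul_inv Γ Γᵀ hSg.det_pos.ne'.isUnit
      hM.det_pos.ne'.isUnit, ← hC, Matrix.mul_assoc]
  have hΘinj : Function.Injective ((Sg + Γ * Γᵀ)⁻¹ * Γ).mulVec := by
    have hinv := mulVec_injective_iff_isUnit.mpr hT.inv.isUnit
    simpa only [Function.comp_def, mulVec_mulVec] using hinv.comp hΓ
  exact ⟨_, isUnit_det_of_mul_eq hΘinj hΘ.symm, hΘ⟩

/-- the surrogate Θ_g = (Σ_g + Σ_B)⁻¹Γ spans the same column space as any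
full-rank basis Φ_g of col(Σ_g⁻¹Γ): Θ_g = Φ_g R_g with R_g invertible. -/
theorem surrogate_spans_discriminant_subspace
    {p G : ℕ}
    (Sg : Matrix (Fin p) (Fin p) ℝ) (hSg : Sg.PosDef)
    (Γ : Matrix (Fin p) (Fin (G - 1)) ℝ) (hΓ : Function.Injective Γ.mulVec)
    (Φg : Matrix (Fin p) (Fin (G - 1)) ℝ) (hΦg : Function.Injective Φg.mulVec)
    (hcol : LinearMap.range Φg.mulVecLin = LinearMap.range (Sg⁻¹ * Γ).mulVecLin) :
    ∃ R : Matrix (Fin (G - 1)) (Fin (G - 1)) ℝ,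
      IsUnit R.det ∧ (Sg + Γ * Γᵀ)⁻¹ * Γ = Φg * R :=
  surrogate_spans_discriminant_subspace_general Sg hSg Γ hΓ Φg hcol
end
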